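/- arXiv:2504.17036 — 2 statements merged into one kernel-verified Lean document; each statement's English description precedes it below -/
import Mathlib

section
/- Let q be a Lie algebra over a field k of characteristic zero, f a Lie subalgebra of q, and V a vector subspace with q = f ⊕ V as vector spaces. Define a bracket on f ⊕ V by [ξ,η]' = [ξ,η] for ξ,η ∈ f, [ξ,v]' = pr_V([ξ,v]) for ξ ∈ f, v ∈ V (where pr_V is the projection onto V along f), and [v,w]' = 0 for v,w ∈ V. Then (f ⊕ V, [·,·]') is a Lie algebra. -/
/-!
STATEMENT 0: Let `q` be a Lie algebra over a field `k` of characteristic zero, `f` a Lie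
subalgebra of `q` and `V` a vector subspace with `q = f ⊕ V`.  The Inönü–Wigner contracted
bracket on `f ⊕ V` (here realized as `↥f × ↥V`) defined by
`[ξ,η]' = [ξ,η]`, `[ξ,v]' = pr_V [ξ,v]`, `[v,w]' = 0`
turns `f ⊕ V` into a Lie algebra (it is bilinear, alternating and satisfies the
Jacobi/Leibniz identity).
-/

variable {k : Type*} [Field k] [CharZero k]
variable {q : Type*} [LieRing q] [LieAlgebra k q]

/-- The projection of `q` onto `V` along `f`. -/
noncomputable def prV (f : LieSubalgebra k q) (V : Submodule k q)
    (h : IsCompl f.toSubmodule V) : q →ₗ[k] ↥V :=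
  V.linearProjOfIsCompl f.toSubmodule h.symm

/-- The contracted bracket on `f ⊕ V ≅ ↥f × ↥V`:
`[(ξ,v), (η,w)]' = ([ξ,η], pr_V [ξ,w] - pr_V [η,v])`, so that in particular
`[ξ,η]' = [ξ,η]`, `[ξ,v]' = pr_V [ξ,v]` and `[v,w]' = 0`. -/
noncomputable def contrBracket (f : LieSubalgebra k q) (V : Submodule k q)
    (h : IsCompl f.toSubmodule V) (x y : ↥f × ↥V) : ↥f × ↥V :=
  (⁅x.1, y.1⁆, prV f V h ⁅(x.1 : q), (y.2 : q)⁆ - prV f V h ⁅(y.1 : q), (x.2 : q)⁆)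

/-!
The contracted bracket is the semidirect product `f ⋉ V`, with `V` abelian and `f` acting on `V`
by `ξ • v = pr_V ⁅ξ, v⁆`. Since `⁅f, f⁆ ⊆ f = ker pr_V`, we have `pr_V ⁅ξ, pr_V u⁆ = pr_V ⁅ξ, u⁆`,
so this action is a representation of `f`, and the Jacobi identity of the semidirect product
follows from that of `q`.
-/

namespace Contraction

variable {k : Type*} [Field k] {q : Type*} [LieRing q] [LieAlgebra k q]
variable (f : LieSubalgebra k q) (V : Submodule k q) (h : IsCompl f.toSubmodule V)

lemma prV_apply_of_mem {x : q} (hx : x ∈ f) : prV f V h x = 0 :=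
  Submodule.projectionOnto_apply_of_mem_right h.symm hx

lemma prV_lie_prV (ξ : f) (u : q) :
    prV f V h ⁅(ξ : q), (prV f V h u : q)⁆ = prV f V h ⁅(ξ : q), u⁆ := by
  set u₁ : f.toSubmodule := f.toSubmodule.projectionOnto V h u
  have hu : (u₁ : q) + prV f V h u = u := Submodule.projection_add_projection_eq_self h u
  have hu₁ : prV f V h ⁅(ξ : q), (u₁ : q)⁆ = 0 := prV_apply_of_mem f V h (f.lie_mem ξ.2 u₁.2)
  conv_rhs => rw [← hu, lie_add, map_add, hu₁, zero_add]

lemma prV_lie_lie (ξ η : f) (u : q) :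
    prV f V h ⁅((⁅ξ, η⁆ : f) : q), u⁆ =
      prV f V h ⁅(ξ : q), (prV f V h ⁅(η : q), u⁆ : q)⁆ -
        prV f V h ⁅(η : q), (prV f V h ⁅(ξ : q), u⁆ : q)⁆ := by
  rw [prV_lie_prV, prV_lie_prV, LieSubalgebra.coe_bracket, lie_lie, map_sub]

lemma contrBracket_add_left (x y z : f × V) :
    contrBracket f V h (x + y) z = contrBracket f V h x z + contrBracket f V h y z := by
  simp only [contrBracket, Prod.fst_add, Prod.snd_add, add_lie, lie_add, AddMemClass.coe_add,
    map_add, Prod.mk_add_mk, Prod.mk.injEq, true_and]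
  abel

lemma contrBracket_add_right (x y z : f × V) :
    contrBracket f V h x (y + z) = contrBracket f V h x y + contrBracket f V h x z := by
  simp only [contrBracket, Prod.fst_add, Prod.snd_add, add_lie, lie_add, AddMemClass.coe_add,
    map_add, Prod.mk_add_mk, Prod.mk.injEq, true_and]
  abel

lemma contrBracket_smul_left (c : k) (x y : f × V) :
    contrBracket f V h (c • x) y = c • contrBracket f V h x y := by
  simp only [contrBracket, Prod.smul_fst, Prod.smul_snd, smul_lie, lie_smul, SetLike.val_smul,
    map_smul, smul_sub, Prod.smul_mk]

lemma contrBracket_smul_right (c : k) (x y : f × V) :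
    contrBracket f V h x (c • y) = c • contrBracket f V h x y := by
  simp only [contrBracket, Prod.smul_fst, Prod.smul_snd, smul_lie, lie_smul, SetLike.val_smul,
    map_smul, smul_sub, Prod.smul_mk]

lemma contrBracket_self (x : f × V) : contrBracket f V h x x = 0 := by
  simp only [contrBracket, lie_self, sub_self, Prod.mk_zero_zero]

lemma contrBracket_leibniz (x y z : f × V) :
    contrBracket f V h x (contrBracket f V h y z) =
      contrBracket f V h (contrBracket f V h x y) z +
        contrBracket f V h y (contrBracket f V h x z) := by
  obtain ⟨ξ, v⟩ := x
  obtain ⟨η, w⟩ := y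
  obtain ⟨ζ, u⟩ := z
  simp only [contrBracket, Prod.mk_add_mk, Prod.mk.injEq, Submodule.coe_sub, lie_sub, map_sub,
    prV_lie_prV, prV_lie_lie]
  exact ⟨leibniz_lie ξ η ζ, by abel⟩

end Contraction

open Contraction in
/-- The Inönü–Wigner contraction `f ⋉ Vᵃ` is a Lie algebra. -/
theorem contraction_isLieAlgebra (f : LieSubalgebra k q) (V : Submodule k q)
    (h : IsCompl f.toSubmodule V) :
    (∀ x y z : ↥f × ↥V,
        contrBracket f V h (x + y) z = contrBracket f V h x z + contrBracket f V h y z) ∧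
    (∀ x y z : ↥f × ↥V,
        contrBracket f V h x (y + z) = contrBracket f V h x y + contrBracket f V h x z) ∧
    (∀ (c : k) (x y : ↥f × ↥V),
        contrBracket f V h (c • x) y = c • contrBracket f V h x y) ∧
    (∀ (c : k) (x y : ↥f × ↥V),
        contrBracket f V h x (c • y) = c • contrBracket f V h x y) ∧
    (∀ x : ↥f × ↥V, contrBracket f V h x x = 0) ∧
    (∀ x y z : ↥f × ↥V,
        contrBracket f V h x (contrBracket f V h y z) =
          contrBracket f V h (contrBracket f V h x y) z +
            contrBracket f V h y (contrBracket f V h x z)) :=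
  ⟨contrBracket_add_left f V h, contrBracket_add_right f V h, contrBracket_smul_left f V h,
    contrBracket_smul_right f V h, contrBracket_self f V h, contrBracket_leibniz f V h⟩
end

section
/- In the setting of disjoint Heisenberg sets Γ_γ (γ ∈ S) in Δ(π') satisfying conditions (C) and (C'), let α ∈ O be a root such that no β ∈ O₃ satisfies α = β̃ or α = θ(β̃). If one of the two sequences (α^i)_{i∈N} or (α^{(i)})_{i∈N} constructed from α and θ(α) is stationary, then the other one is also stationary. -/
/-- The combinatorial setting of Section 4: disjoint Heisenberg sets `Γ_γ` (`γ ∈ S`)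
inside `Δ(π')` satisfying conditions (C) and (C'), abstracted as follows.  `O` is the
union of the punctured Heisenberg sets, `θ` the pairing involution, `Sα α` the set
`S_α = {β ∈ O | α + β ∈ S and [x_α, x_β]~ ≠ 0}`, and `tilde` the map `α ↦ α̃` of
condition (C').  `O_n = {α ∈ O | |S_α| = n}`. -/
structure ChainSetup (M : Type*) [AddCommGroup M] where
  S : Set M
  O : Set M
  Ofin : O.Finite
  θ : M → M
  tilde : M → M
  Sα : M → Set M
  θ_mem : ∀ α ∈ O, θ α ∈ O
  θ_invol : ∀ α ∈ O, θ (θ α) = α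
  θ_ne : ∀ α ∈ O, θ α ≠ α
  sum_mem_S : ∀ α ∈ O, α + θ α ∈ S
  Sα_sub : ∀ α ∈ O, Sα α ⊆ O
  Sα_sum : ∀ α ∈ O, ∀ β ∈ Sα α, α + β ∈ S
  Sα_symm : ∀ α ∈ O, ∀ β ∈ Sα α, α ∈ Sα β
  θ_in_Sα : ∀ α ∈ O, θ α ∈ Sα α
  /-- Condition (C'): every `α ∈ O` lies in `O₁ ⊔ O₂ ⊔ O₃`. -/
  card₁₂₃ : ∀ α ∈ O, 1 ≤ (Sα α).ncard ∧ (Sα α).ncard ≤ 3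
  /-- Condition (C'): for `α ∈ O₃` there is `α̃ ∈ S_α ∩ O₂ \ {θ α}` with `θ(α̃) ∈ O₁`. -/
  tilde_spec : ∀ α ∈ O, (Sα α).ncard = 3 →
    tilde α ∈ Sα α ∧ tilde α ≠ θ α ∧ (Sα (tilde α)).ncard = 2 ∧ (Sα (θ (tilde α))).ncard = 1
  /-- Notation 4.2: for `α ∈ O₂` one sets `α̃ = θ α`. -/
  tilde_eq : ∀ α ∈ O, (Sα α).ncard = 2 → tilde α = θ α

namespace ChainSetup

variable {M : Type*} [AddCommGroup M] (c : ChainSetup M)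

/-- `a` is a sequence `(α^i)_{i ∈ ℕ}` constructed from the root `α` as in
Definition 4.4 (equivalently, `(α^{(i)})` is such a sequence constructed from `θ α`,
Definition 4.3): `a 0 = α`; if `θ(a n) ∈ O₁` then `a (n+1) = a n`; otherwise
`a (n+1) ∈ S_{θ(a n)} \ {a n, (θ(a n))~}`. -/
def IsSeq (α : M) (a : ℕ → M) : Prop :=
  a 0 = α ∧ (∀ n, a n ∈ c.O) ∧ ∀ n,
    ((c.Sα (c.θ (a n))).ncard = 1 → a (n + 1) = a n) ∧
    (2 ≤ (c.Sα (c.θ (a n))).ncard →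
      a (n + 1) ∈ c.Sα (c.θ (a n)) \ {a n, c.tilde (c.θ (a n))})

/-- A sequence is stationary if it is eventually constant from some rank on. -/
def Stationary (_c : ChainSetup M) (a : ℕ → M) : Prop := ∃ n, a (n + 1) = a n

/-- `α` is not of the form `β̃` or `θ(β̃)` for `β ∈ O₃`. -/
def NotTildeImage (α : M) : Prop :=
  ∀ β ∈ c.O, (c.Sα β).ncard = 3 → α ≠ c.tilde β ∧ α ≠ c.θ (c.tilde β)

end ChainSetup

namespace ChainSetup

variable {M : Type*} [AddCommGroup M] (c : ChainSetup M)

lemma θ_inj {x y : M} (hx : x ∈ c.O) (hy : y ∈ c.O) (h : c.θ x = c.θ y) : x = y := by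
  have h2 := congrArg c.θ h
  rwa [c.θ_invol x hx, c.θ_invol y hy] at h2

omit [AddCommGroup M] in
lemma eq_of_ncard_one {s : Set M} (h : s.ncard = 1) {a b : M} (ha : a ∈ s) (hb : b ∈ s) :
    a = b := by
  obtain ⟨x, rfl⟩ := Set.ncard_eq_one.mp h
  rw [Set.mem_singleton_iff] at ha hb; rw [ha, hb]

lemma Sα_eq_singleton {x : M} (hx : x ∈ c.O) (h1 : (c.Sα x).ncard = 1) :
    c.Sα x = {c.θ x} := by
  obtain ⟨b, hb⟩ := Set.ncard_eq_one.mp h1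
  have hm := c.θ_in_Sα x hx
  rw [hb] at hm ⊢
  rw [Set.mem_singleton_iff] at hm
  rw [hm]

/-- Uniqueness of the (moving) successor. -/
lemma succ_unique {x y₁ y₂ : M} (hx : x ∈ c.O)
    (h₁ : y₁ ∈ c.Sα (c.θ x)) (h₁x : y₁ ≠ x) (h₁t : y₁ ≠ c.tilde (c.θ x))
    (h₂ : y₂ ∈ c.Sα (c.θ x)) (h₂x : y₂ ≠ x) (h₂t : y₂ ≠ c.tilde (c.θ x)) :
    y₁ = y₂ := by
  have hθx : c.θ x ∈ c.O := c.θ_mem x hx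
  have hxm : x ∈ c.Sα (c.θ x) := by
    have := c.θ_in_Sα (c.θ x) hθx
    rwa [c.θ_invol x hx] at this
  have hfin : (c.Sα (c.θ x)).Finite := c.Ofin.subset (c.Sα_sub _ hθx)
  obtain ⟨hk1, hk3⟩ := c.card₁₂₃ _ hθx
  have hcases : (c.Sα (c.θ x)).ncard = 1 ∨ (c.Sα (c.θ x)).ncard = 2 ∨
      (c.Sα (c.θ x)).ncard = 3 := by omega
  rcases hcases with h | h | h
  · have hs := c.Sα_eq_singleton hθx h
    rw [c.θ_invol x hx] at hs
    rw [hs, Set.mem_singleton_iff] at h₁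
    exact absurd h₁ h₁x
  · have hd : (c.Sα (c.θ x) \ {x}).ncard = 1 := by
      rw [Set.ncard_diff (Set.singleton_subset_iff.mpr hxm), h, Set.ncard_singleton]
    exact eq_of_ncard_one hd ⟨h₁, h₁x⟩ ⟨h₂, h₂x⟩
  · obtain ⟨htm, htne, -, -⟩ := c.tilde_spec _ hθx h
    rw [c.θ_invol x hx] at htne
    have hpair : ({x, c.tilde (c.θ x)} : Set M) ⊆ c.Sα (c.θ x) := by
      intro z hz; rcases hz with rfl | hz
      · exact hxm
      · rw [Set.mem_singleton_iff] at hz; rw [hz]; exact htm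
    have hd : (c.Sα (c.θ x) \ {x, c.tilde (c.θ x)}).ncard = 1 := by
      rw [Set.ncard_diff hpair, h, Set.ncard_pair (Ne.symm htne)]
    exact eq_of_ncard_one hd ⟨h₁, by simp [h₁x, h₁t]⟩ ⟨h₂, by simp [h₂x, h₂t]⟩

/-- Reversal of a moving step. -/
lemma rev {x y : M} (hx : x ∈ c.O)
    (hy : y ∈ c.Sα (c.θ x)) (hyx : y ≠ x)
    (hnt3 : ∀ z ∈ c.O, (c.Sα z).ncard = 3 → c.θ x ≠ c.tilde z) :
    c.θ x ∈ c.Sα y ∧ c.θ x ≠ c.θ y ∧ c.θ x ≠ c.tilde y := by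
  have hθx : c.θ x ∈ c.O := c.θ_mem x hx
  have hyO : y ∈ c.O := c.Sα_sub _ hθx hy
  have h1 : c.θ x ∈ c.Sα y := c.Sα_symm _ hθx _ hy
  have h2 : c.θ x ≠ c.θ y := fun h => hyx (c.θ_inj hx hyO h).symm
  refine ⟨h1, h2, ?_⟩
  obtain ⟨hk1, hk3⟩ := c.card₁₂₃ _ hyO
  have hcases : (c.Sα y).ncard = 1 ∨ (c.Sα y).ncard = 2 ∨ (c.Sα y).ncard = 3 := by omega
  rcases hcases with h | h | h
  · have hs := c.Sα_eq_singleton hyO h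
    rw [hs, Set.mem_singleton_iff] at h1
    exact absurd h1 h2
  · rw [c.tilde_eq _ hyO h]; exact h2
  · exact hnt3 y hyO h


section Seq

variable {α : M} {a a' : ℕ → M}

/-- Every step of a never-stationary sequence is a moving step. -/
lemma step_mem (ha : c.IsSeq α a) {n : ℕ} (hne : a (n + 1) ≠ a n) :
    a (n + 1) ∈ c.Sα (c.θ (a n)) ∧ a (n + 1) ≠ a n ∧ a (n + 1) ≠ c.tilde (c.θ (a n)) := by
  obtain ⟨-, hmem, hstep⟩ := ha
  have hθ : c.θ (a n) ∈ c.O := c.θ_mem _ (hmem n)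
  obtain ⟨hk1, hk3⟩ := c.card₁₂₃ _ hθ
  by_cases h1 : (c.Sα (c.θ (a n))).ncard = 1
  · exact absurd ((hstep n).1 h1) hne
  · have h2 : 2 ≤ (c.Sα (c.θ (a n))).ncard := by omega
    have := (hstep n).2 h2
    refine ⟨this.1, hne, ?_⟩
    intro h; exact this.2 (by simp [h])

/-- Reversal along a never-stationary sequence started at `θ α`. -/
lemma rev_seq (hα : α ∈ c.O) (hnt : c.NotTildeImage α)
    (ha' : c.IsSeq (c.θ α) a') (hns : ∀ n, a' (n + 1) ≠ a' n) (n : ℕ) :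
    c.θ (a' n) ∈ c.Sα (a' (n + 1)) ∧ c.θ (a' n) ≠ c.θ (a' (n + 1)) ∧
      c.θ (a' n) ≠ c.tilde (a' (n + 1)) := by
  obtain ⟨h0, hmem, -⟩ := id ha'
  have hx : a' n ∈ c.O := hmem n
  have hstep := c.step_mem ha' (hns n)
  refine c.rev hx hstep.1 hstep.2.1 ?_
  intro z hz h3 heq
  -- θ (a' n) = tilde z with z ∈ O₃ leads to a contradiction
  have hcard1 : (c.Sα (a' n)).ncard = 1 := by
    have h4 := (c.tilde_spec z hz h3).2.2.2
    rw [← heq, c.θ_invol _ hx] at h4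
    exact h4
  have hsing : c.Sα (a' n) = {c.θ (a' n)} := c.Sα_eq_singleton hx hcard1
  cases n with
  | zero =>
    rw [h0] at heq
    rw [c.θ_invol _ hα] at heq
    exact (hnt z hz h3).1 heq
  | succ m =>
    have hstep' := c.step_mem ha' (hns m)
    have hin : c.θ (a' m) ∈ c.Sα (a' (m + 1)) :=
      c.Sα_symm _ (c.θ_mem _ (hmem m)) _ hstep'.1
    rw [hsing, Set.mem_singleton_iff] at hin
    exact hns m (c.θ_inj (hmem (m + 1)) (hmem m) hin.symm)

/-- Backward determinism. -/
lemma back_det (hα : α ∈ c.O) (hnt : c.NotTildeImage α)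
    (ha' : c.IsSeq (c.θ α) a') (hns : ∀ n, a' (n + 1) ≠ a' n) {m m' : ℕ}
    (h : a' (m + 1) = a' (m' + 1)) : a' m = a' m' := by
  obtain ⟨-, hmem, -⟩ := id ha'
  have r1 := c.rev_seq hα hnt ha' hns m
  have r2 := c.rev_seq hα hnt ha' hns m'
  rw [h] at r1
  set x := c.θ (a' (m' + 1)) with hxdef
  have hxO : x ∈ c.O := c.θ_mem _ (hmem (m' + 1))
  have hθθ : c.θ x = a' (m' + 1) := c.θ_invol _ (hmem (m' + 1))
  have := c.succ_unique hxO (by rw [hθθ]; exact r1.1) (by rw [hxdef]; exact r1.2.1)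
    (by rw [hθθ]; exact r1.2.2) (by rw [hθθ]; exact r2.1) (by rw [hxdef]; exact r2.2.1)
    (by rw [hθθ]; exact r2.2.2)
  exact c.θ_inj (hmem m) (hmem m') this

lemma exists_repeat (hmemO : ∀ n, a' n ∈ c.O) : ∃ i j, i < j ∧ a' i = a' j := by
  have hninj : ¬ Function.Injective a' := by
    intro hinj
    exact (Set.infinite_of_injective_forall_mem hinj hmemO) c.Ofin
  obtain ⟨i, j, hij, hne⟩ := Function.not_injective_iff.mp hninj
  rcases lt_or_gt_of_ne hne with h | h
  · exact ⟨i, j, h, hij⟩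
  · exact ⟨j, i, h, hij.symm⟩

lemma back_shift (hα : α ∈ c.O) (hnt : c.NotTildeImage α)
    (ha' : c.IsSeq (c.θ α) a') (hns : ∀ n, a' (n + 1) ≠ a' n) {i j : ℕ}
    (hij : i < j) (h : a' i = a' j) : a' 0 = a' (j - i) := by
  have key : ∀ k, k ≤ i → a' (i - k) = a' (j - k) := by
    intro k
    induction k with
    | zero => intro _; simpa using h
    | succ k ih =>
      intro hk
      have h1 : i - k = (i - (k + 1)) + 1 := by omega
      have h2 : j - k = (j - (k + 1)) + 1 := by omega
      have hkk := ih (by omega)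
      rw [h1, h2] at hkk
      exact c.back_det hα hnt ha' hns hkk
  have := key i le_rfl
  simpa using this

lemma periodic (ha' : c.IsSeq (c.θ α) a') (hns : ∀ n, a' (n + 1) ≠ a' n) {p : ℕ}
    (hp : a' p = a' 0) : ∀ n, a' (n + p) = a' n := by
  obtain ⟨-, hmem, -⟩ := id ha'
  intro n
  induction n with
  | zero => simpa using hp
  | succ n ih =>
    have s1 := c.step_mem ha' (hns n)
    have s2 := c.step_mem ha' (hns (n + p))
    rw [ih] at s2
    have hidx : n + 1 + p = (n + p) + 1 := by omega
    rw [hidx]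
    exact c.succ_unique (hmem n) s2.1 s2.2.1 s2.2.2 s1.1 s1.2.1 s1.2.2

lemma key (hα : α ∈ c.O) (hnt : c.NotTildeImage α) {a a' : ℕ → M} (ha : c.IsSeq α a)
    (ha' : c.IsSeq (c.θ α) a') (hs : c.Stationary a) : c.Stationary a' := by
  by_contra hc
  have hns : ∀ n, a' (n + 1) ≠ a' n := fun n h => hc ⟨n, h⟩
  obtain ⟨N, hN⟩ := hs
  obtain ⟨ha0, hamem, hastep⟩ := id ha
  obtain ⟨ha'0, hmem, -⟩ := id ha'
  obtain ⟨i, j, hij, hrep⟩ := c.exists_repeat hmem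
  have hp0 : a' 0 = a' (j - i) := c.back_shift hα hnt ha' hns hij hrep
  set p := j - i with hpdef
  have hp1 : 1 ≤ p := by omega
  have hper : ∀ n, a' (n + p) = a' n := c.periodic ha' hns hp0.symm
  have hmul : ∀ t, a' (p * t) = a' 0 := by
    intro t
    induction t with
    | zero => simp
    | succ t ih =>
      have hh : p * (t + 1) = p * t + p := by ring
      rw [hh, hper, ih]
  set K := p * (N + 1) with hKdef
  have hK : a' K = c.θ α := by rw [hmul (N + 1), ha'0]
  have hNK : N + 1 ≤ K := by
    calc N + 1 = 1 * (N + 1) := by ring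
    _ ≤ p * (N + 1) := Nat.mul_le_mul_right _ hp1
  -- The reversed chain dominates `a` and never stops, contradiction with `hN`.
  have claim : ∀ k, k ≤ K → a k = c.θ (a' (K - k)) := by
    intro k
    induction k with
    | zero =>
      intro _
      have hz : K - 0 = K := rfl
      rw [ha0, hz, hK]
      exact (c.θ_invol _ hα).symm
    | succ k ih =>
      intro hk1
      have ihh := ih (by omega)
      have hm : (K - (k + 1)) + 1 = K - k := by omega
      have r := c.rev_seq hα hnt ha' hns (K - (k + 1))
      rw [hm] at r
      have hak : a' (K - k) = c.θ (a k) := by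
        rw [ihh, c.θ_invol _ (hmem _)]
      rw [hak] at r
      have hθθ : c.θ (c.θ (a k)) = a k := c.θ_invol _ (hamem k)
      rw [hθθ] at r
      have hne1 : (c.Sα (c.θ (a k))).ncard ≠ 1 := by
        intro h1
        have hs1 := c.Sα_eq_singleton (c.θ_mem _ (hamem k)) h1
        rw [hθθ] at hs1
        have hr1 := r.1
        rw [hs1, Set.mem_singleton_iff] at hr1
        exact r.2.1 hr1
      obtain ⟨hk1', hk3'⟩ := c.card₁₂₃ _ (c.θ_mem _ (hamem k))
      have h2 : 2 ≤ (c.Sα (c.θ (a k))).ncard := by omega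
      have hstep := (hastep k).2 h2
      exact c.succ_unique (hamem k) hstep.1 (fun h => hstep.2 (by simp [h]))
        (fun h => hstep.2 (by simp [h])) r.1 r.2.1 r.2.2
  -- contradiction at `N`
  have ihh := claim N (by omega)
  have hm : (K - (N + 1)) + 1 = K - N := by omega
  have r := c.rev_seq hα hnt ha' hns (K - (N + 1))
  rw [hm] at r
  have hak : a' (K - N) = c.θ (a N) := by
    rw [ihh, c.θ_invol _ (hmem _)]
  rw [hak] at r
  have hθθ : c.θ (c.θ (a N)) = a N := c.θ_invol _ (hamem N)
  rw [hθθ] at r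
  have hne1 : (c.Sα (c.θ (a N))).ncard ≠ 1 := by
    intro h1
    have hs1 := c.Sα_eq_singleton (c.θ_mem _ (hamem N)) h1
    rw [hθθ] at hs1
    have hr1 := r.1
    rw [hs1, Set.mem_singleton_iff] at hr1
    exact r.2.1 hr1
  obtain ⟨hk1', hk3'⟩ := c.card₁₂₃ _ (c.θ_mem _ (hamem N))
  have h2 : 2 ≤ (c.Sα (c.θ (a N))).ncard := by omega
  have hstep := (hastep N).2 h2
  exact hstep.2 (by simp [hN])

lemma notTildeImage_θ (hα : α ∈ c.O) (hnt : c.NotTildeImage α) :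
    c.NotTildeImage (c.θ α) := by
  intro β hβ h3
  obtain ⟨h1, h2⟩ := hnt β hβ h3
  have htβ : c.tilde β ∈ c.O := c.Sα_sub β hβ (c.tilde_spec β hβ h3).1
  constructor
  · intro h
    apply h2
    rw [← c.θ_invol α hα, h]
  · intro h
    exact h1 (c.θ_inj hα htβ h)

end Seq

end ChainSetup

/-!
STATEMENT 11: In the setting of disjoint Heisenberg sets `Γ_γ` (`γ ∈ S`) in `Δ(π')`
satisfying conditions (C) and (C'), let `α ∈ O` be a root such that no `β ∈ O₃`
satisfies `α = β̃` or `α = θ(β̃)`.  If one of the two sequences `(α^i)` or `(α^{(i)})`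
(constructed from `α` and from `θ(α)`) is stationary, then so is the other.
-/
theorem stationary_iff_stationary {M : Type*} [AddCommGroup M] (c : ChainSetup M)
    (α : M) (hα : α ∈ c.O) (hnt : c.NotTildeImage α)
    (a a' : ℕ → M) (ha : c.IsSeq α a) (ha' : c.IsSeq (c.θ α) a') :
    c.Stationary a ↔ c.Stationary a' := by
  constructor
  · intro hs
    exact c.key hα hnt ha ha' hs
  · intro hs
    have hθα : c.θ α ∈ c.O := c.θ_mem α hα
    have ha2 : c.IsSeq (c.θ (c.θ α)) a :=
      ⟨by rw [ha.1, c.θ_invol α hα], ha.2.1, ha.2.2⟩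
    exact c.key hθα (c.notTildeImage_θ hα hnt) ha' ha2 hs
end
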